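/- arXiv:1902.01502 — 4 statements merged into one kernel-verified Lean document; each statement's English description precedes it below -/
import Mathlib

section
/- For every bounded measurable ψ : [0,T] → ℝ and every t ∈ [0,T], one has 0 ≤ Θ(ψ)(t) ≤ n₀ + r_N · T. -/
open MeasureTheory Set intervalIntegral

/-- The explicit solution operator `Λ` for the tumor-cell equation (Bernoulli's method). -/
noncomputable def Lam (rA kA αA γA lam a₀ : ℝ) (ψ : ℝ → ℝ) (t : ℝ) : ℝ :=
  (a₀ * kA * Real.exp (lam * t) * Real.exp (-(αA * γA) * ∫ ξ in (0:ℝ)..t, |ψ ξ|)) /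
    (kA + a₀ * rA *
      ∫ s in (0:ℝ)..t, Real.exp (lam * s) * Real.exp (-(αA * γA) * ∫ ξ in (0:ℝ)..s, |ψ ξ|))

/-- The explicit solution operator `Θ` for the normal-cell equation
(variation of constants formula). -/
noncomputable def Theta (rN μN β₁ αN γN rA kA αA γA lam a₀ n₀ : ℝ) (ψ : ℝ → ℝ) (t : ℝ) : ℝ :=
  (n₀ + rN * ∫ s in (0:ℝ)..t,
      Real.exp (μN * s) * Real.exp ((αN * γN) * ∫ ξ in (0:ℝ)..s, |ψ ξ|) *
        Real.exp (β₁ * ∫ ξ in (0:ℝ)..s, Lam rA kA αA γA lam a₀ ψ ξ)) /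
    (Real.exp (μN * t) * Real.exp ((αN * γN) * ∫ ξ in (0:ℝ)..t, |ψ ξ|) *
      Real.exp (β₁ * ∫ ξ in (0:ℝ)..t, Lam rA kA αA γA lam a₀ ψ ξ))

/-- **Lemma 5(i) of the paper.** `0 ≤ Θ(ψ)(t) ≤ n₀ + r_N T` on `[0,T]`. -/
theorem Theta_nonneg_and_le
    (T rA kA μA εA αA γA rN μN β₁ αN γN a₀ n₀ : ℝ)
    (hT : 0 < T) (hrA : 0 < rA) (hkA : 0 < kA)
    (hμA : 0 ≤ μA) (hεA : 0 ≤ εA) (hαA : 0 ≤ αA) (hγA : 0 ≤ γA)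
    (hrN : 0 ≤ rN) (hμN : 0 ≤ μN) (hβ₁ : 0 ≤ β₁) (hαN : 0 ≤ αN) (hγN : 0 ≤ γN)
    (ha₀ : 0 ≤ a₀) (hn₀ : 0 ≤ n₀)
    (ψ : ℝ → ℝ) (hmeas : Measurable ψ)
    (hbdd : ∃ M : ℝ, ∀ t ∈ Icc (0 : ℝ) T, |ψ t| ≤ M) :
    ∀ t ∈ Icc (0 : ℝ) T,
      0 ≤ Theta rN μN β₁ αN γN rA kA αA γA (rA - (μA + εA)) a₀ n₀ ψ t ∧
      Theta rN μN β₁ αN γN rA kA αA γA (rA - (μA + εA)) a₀ n₀ ψ t ≤ n₀ + rN * T := by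
  obtain ⟨M, hM⟩ := hbdd
  set lam := rA - (μA + εA) with hlam
  set c := αA * γA with hc
  set c1 := αN * γN with hc1
  -- integrability of |ψ| on [0,T]
  have hψint : IntegrableOn (fun ξ => |ψ ξ|) (Icc 0 T) volume := by
    apply Measure.integrableOn_of_bounded (M := M) (measure_Icc_lt_top).ne
      hmeas.abs.aestronglyMeasurable
    filter_upwards [ae_restrict_mem measurableSet_Icc] with x hx
    simpa [abs_abs] using hM x hx
  have hψuIcc : IntegrableOn (fun ξ => |ψ ξ|) (uIcc 0 T) volume := by
    rwa [uIcc_of_le hT.le]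
  -- the primitive F of |ψ|
  set F : ℝ → ℝ := fun s => ∫ ξ in (0:ℝ)..s, |ψ ξ|
  have hF_cont : ContinuousOn F (Icc 0 T) := by
    have := intervalIntegral.continuousOn_primitive_interval (a := (0:ℝ)) (b := T) hψuIcc
    rwa [uIcc_of_le hT.le] at this
  have hψii : ∀ t ∈ Icc (0:ℝ) T, IntervalIntegrable (fun ξ => |ψ ξ|) volume 0 t := by
    intro t ht
    have hsub : uIcc 0 t ⊆ Icc 0 T := by
      rw [uIcc_of_le ht.1]; exact Icc_subset_Icc le_rfl ht.2
    exact (hψint.mono_set hsub).intervalIntegrable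
  have hF_nonneg : ∀ t ∈ Icc (0:ℝ) T, 0 ≤ F t := fun t ht =>
    intervalIntegral.integral_nonneg ht.1 (fun u _ => abs_nonneg _)
  have hF_mono : ∀ s t : ℝ, s ∈ Icc (0:ℝ) T → t ∈ Icc (0:ℝ) T → s ≤ t → F s ≤ F t := by
    intro s t hs ht hst
    exact intervalIntegral.integral_mono_interval le_rfl hs.1 hst
      (Filter.Eventually.of_forall fun u => abs_nonneg _) (hψii t ht)
  -- the integrand g of the denominator of Lam
  set g : ℝ → ℝ := fun s => Real.exp (lam * s) * Real.exp (-c * F s)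
  have hg_cont : ContinuousOn g (Icc 0 T) :=
    ((Real.continuous_exp.comp (continuous_const.mul continuous_id)).continuousOn).mul
      (Real.continuous_exp.comp_continuousOn (continuousOn_const.mul hF_cont))
  have hg_nonneg : ∀ s, 0 ≤ g s := fun s =>
    mul_nonneg (Real.exp_pos _).le (Real.exp_pos _).le
  have hg_int : IntegrableOn g (Icc 0 T) volume := hg_cont.integrableOn_Icc
  set G : ℝ → ℝ := fun t => ∫ s in (0:ℝ)..t, g s
  have hG_cont : ContinuousOn G (Icc 0 T) := by
    have := intervalIntegral.continuousOn_primitive_interval (a := (0:ℝ)) (b := T)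
      (by rwa [uIcc_of_le hT.le])
    rwa [uIcc_of_le hT.le] at this
  have hG_nonneg : ∀ t ∈ Icc (0:ℝ) T, 0 ≤ G t := fun t ht =>
    intervalIntegral.integral_nonneg ht.1 (fun u _ => hg_nonneg u)
  have hden_pos : ∀ t ∈ Icc (0:ℝ) T, 0 < kA + a₀ * rA * G t := by
    intro t ht
    have := mul_nonneg (mul_nonneg ha₀ hrA.le) (hG_nonneg t ht)
    linarith
  -- Lam
  have hLam_eq : ∀ ξ, Lam rA kA αA γA lam a₀ ψ ξ =
      (a₀ * kA * Real.exp (lam * ξ) * Real.exp (-c * F ξ)) / (kA + a₀ * rA * G ξ) :=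
    fun ξ => rfl
  have hLam_nonneg : ∀ ξ ∈ Icc (0:ℝ) T, 0 ≤ Lam rA kA αA γA lam a₀ ψ ξ := by
    intro ξ hξ
    rw [hLam_eq]
    exact div_nonneg (by positivity) (hden_pos ξ hξ).le
  have hLam_cont : ContinuousOn (Lam rA kA αA γA lam a₀ ψ) (Icc 0 T) := by
    have hnum : ContinuousOn
        (fun ξ => a₀ * kA * Real.exp (lam * ξ) * Real.exp (-c * F ξ)) (Icc 0 T) :=
      ((continuous_const.mul
          (Real.continuous_exp.comp (continuous_const.mul continuous_id))).continuousOn).mul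
        (Real.continuous_exp.comp_continuousOn (continuousOn_const.mul hF_cont))
    have hden : ContinuousOn (fun ξ => kA + a₀ * rA * G ξ) (Icc 0 T) :=
      continuousOn_const.add (continuousOn_const.mul hG_cont)
    have : ContinuousOn
        (fun ξ => (a₀ * kA * Real.exp (lam * ξ) * Real.exp (-c * F ξ)) /
          (kA + a₀ * rA * G ξ)) (Icc 0 T) :=
      hnum.div hden (fun ξ hξ => (hden_pos ξ hξ).ne')
    exact this.congr (fun ξ _ => hLam_eq ξ)
  -- primitive of Lam
  set H : ℝ → ℝ := fun t => ∫ ξ in (0:ℝ)..t, Lam rA kA αA γA lam a₀ ψ ξ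
  have hLam_int : IntegrableOn (Lam rA kA αA γA lam a₀ ψ) (Icc 0 T) volume :=
    hLam_cont.integrableOn_Icc
  have hLamii : ∀ t ∈ Icc (0:ℝ) T,
      IntervalIntegrable (Lam rA kA αA γA lam a₀ ψ) volume 0 t := by
    intro t ht
    have hsub : uIcc 0 t ⊆ Icc 0 T := by
      rw [uIcc_of_le ht.1]; exact Icc_subset_Icc le_rfl ht.2
    exact (hLam_int.mono_set hsub).intervalIntegrable
  have hH_cont : ContinuousOn H (Icc 0 T) := by
    have := intervalIntegral.continuousOn_primitive_interval (a := (0:ℝ)) (b := T)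
      (by rwa [uIcc_of_le hT.le])
    rwa [uIcc_of_le hT.le] at this
  have hH_nonneg : ∀ t ∈ Icc (0:ℝ) T, 0 ≤ H t := by
    intro t ht
    refine intervalIntegral.integral_nonneg ht.1 (fun u hu => ?_)
    exact hLam_nonneg u ⟨hu.1, hu.2.trans ht.2⟩
  have hH_mono : ∀ s t : ℝ, s ∈ Icc (0:ℝ) T → t ∈ Icc (0:ℝ) T → s ≤ t → H s ≤ H t := by
    intro s t hs ht hst
    refine intervalIntegral.integral_mono_interval le_rfl hs.1 hst ?_ (hLamii t ht)
    filter_upwards [ae_restrict_mem measurableSet_Ioc] with u hu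
    exact hLam_nonneg u ⟨hu.1.le, hu.2.trans ht.2⟩
  -- the integrand f of Theta
  set f : ℝ → ℝ := fun s => Real.exp (μN * s) * Real.exp (c1 * F s) * Real.exp (β₁ * H s)
  have hf_cont : ContinuousOn f (Icc 0 T) :=
    (((Real.continuous_exp.comp (continuous_const.mul continuous_id)).continuousOn).mul
      (Real.continuous_exp.comp_continuousOn (continuousOn_const.mul hF_cont))).mul
      (Real.continuous_exp.comp_continuousOn (continuousOn_const.mul hH_cont))
  have hf_pos : ∀ s, 0 < f s := fun s => by positivity
  have hf_one : ∀ s ∈ Icc (0:ℝ) T, 1 ≤ f s := by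
    intro s hs
    have h1 : 1 ≤ Real.exp (μN * s) := Real.one_le_exp (mul_nonneg hμN hs.1)
    have h2 : 1 ≤ Real.exp (c1 * F s) :=
      Real.one_le_exp (mul_nonneg (mul_nonneg hαN hγN) (hF_nonneg s hs))
    have h3 : 1 ≤ Real.exp (β₁ * H s) :=
      Real.one_le_exp (mul_nonneg hβ₁ (hH_nonneg s hs))
    show (1:ℝ) ≤ Real.exp (μN * s) * Real.exp (c1 * F s) * Real.exp (β₁ * H s)
    have h12 : (1:ℝ) * 1 ≤ Real.exp (μN * s) * Real.exp (c1 * F s) :=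
      mul_le_mul h1 h2 zero_le_one (zero_le_one.trans h1)
    rw [one_mul] at h12
    have := mul_le_mul h12 h3 zero_le_one (zero_le_one.trans h12)
    linarith
  have hf_mono : ∀ s t : ℝ, s ∈ Icc (0:ℝ) T → t ∈ Icc (0:ℝ) T → s ≤ t → f s ≤ f t := by
    intro s t hs ht hst
    have h1 : Real.exp (μN * s) ≤ Real.exp (μN * t) :=
      Real.exp_le_exp.2 (mul_le_mul_of_nonneg_left hst hμN)
    have h2 : Real.exp (c1 * F s) ≤ Real.exp (c1 * F t) :=
      Real.exp_le_exp.2 (mul_le_mul_of_nonneg_left (hF_mono s t hs ht hst)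
        (mul_nonneg hαN hγN))
    have h3 : Real.exp (β₁ * H s) ≤ Real.exp (β₁ * H t) :=
      Real.exp_le_exp.2 (mul_le_mul_of_nonneg_left (hH_mono s t hs ht hst) hβ₁)
    have e1 := (Real.exp_pos (μN * s)).le
    have e2 := (Real.exp_pos (c1 * F s)).le
    have e3 := (Real.exp_pos (β₁ * H s)).le
    have e1' := (Real.exp_pos (μN * t)).le
    have e2' := (Real.exp_pos (c1 * F t)).le
    show Real.exp (μN * s) * Real.exp (c1 * F s) * Real.exp (β₁ * H s) ≤
      Real.exp (μN * t) * Real.exp (c1 * F t) * Real.exp (β₁ * H t)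
    exact mul_le_mul (mul_le_mul h1 h2 e2 e1') h3 e3 (mul_nonneg e1' e2')
  -- main argument
  intro t ht
  have hTheta : Theta rN μN β₁ αN γN rA kA αA γA lam a₀ n₀ ψ t =
      (n₀ + rN * ∫ s in (0:ℝ)..t, f s) / f t := rfl
  have hsub : uIcc 0 t ⊆ Icc 0 T := by
    rw [uIcc_of_le ht.1]; exact Icc_subset_Icc le_rfl ht.2
  have hfti : IntervalIntegrable f volume 0 t :=
    (hf_cont.mono hsub).intervalIntegrable
  have hint_nonneg : 0 ≤ ∫ s in (0:ℝ)..t, f s :=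
    intervalIntegral.integral_nonneg ht.1 (fun u _ => (hf_pos u).le)
  constructor
  · rw [hTheta]
    exact div_nonneg (by positivity) (hf_pos t).le
  · rw [hTheta, div_le_iff₀ (hf_pos t)]
    have hle : (∫ s in (0:ℝ)..t, f s) ≤ t * f t := by
      have : (∫ s in (0:ℝ)..t, f s) ≤ ∫ _ in (0:ℝ)..t, f t := by
        refine intervalIntegral.integral_mono_on ht.1 hfti intervalIntegrable_const ?_
        intro x hx
        exact hf_mono x t ⟨hx.1, hx.2.trans ht.2⟩ ht hx.2
      rwa [intervalIntegral.integral_const, smul_eq_mul, sub_zero] at this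
    have hft1 : 1 ≤ f t := hf_one t ht
    have htT : t ≤ T := ht.2
    nlinarith [mul_le_mul_of_nonneg_left hle hrN,
      mul_nonneg hn₀ (sub_nonneg.2 hft1),
      mul_nonneg (mul_nonneg hrN (sub_nonneg.2 htT)) (hf_pos t).le]
end

section
/- Let λ ∈ ℝ, c ≥ 0, C_λ = max{1, e^{λT}}, and let ψ₁, ψ₂ : [0,T] → ℝ be bounded measurable functions. Writing E_i(t) = e^{−c ∫₀ᵗ |ψ_i(ξ)| dξ} and I_i(t) = ∫₀ᵗ e^{λs} E_i(s) ds for i = 1,2, one has for every t ∈ [0,T]: |E₁(t) I₂(t) − E₂(t) I₁(t)| ≤ 2 c C_λ T² · sup_{ξ ∈ [0,T]} |ψ₁(ξ) − ψ₂(ξ)|. -/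
open MeasureTheory Set intervalIntegral

/-!
Write `E_i = exp (-c F_i)` with `F_i(s) = ∫₀ˢ |ψ_i|` and `S = sup |ψ₁ - ψ₂|`. Since `exp` is
1-Lipschitz on `(-∞, 0]`, `|E₁ - E₂| ≤ c |F₁ - F₂| ≤ c S T`, and `0 < E_i ≤ 1`. With the weight
`e^{λs} ≤ C_λ` this gives `|I₁| ≤ C_λ T` and `|I₂ - I₁| ≤ C_λ c S T²`, and the splitting
`E₁ I₂ - E₂ I₁ = E₁ (I₂ - I₁) + I₁ (E₁ - E₂)` yields the two halves of the bound.
-/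

theorem Real.lipschitzOnWith_exp_Iic_zero : LipschitzOnWith 1 Real.exp (Iic 0) :=
  (convex_Iic 0).lipschitzOnWith_of_nnnorm_hasDerivWithin_le
    (fun x _ => (Real.hasDerivAt_exp x).hasDerivWithinAt) fun x hx => by
      rw [← NNReal.coe_le_coe, coe_nnnorm, NNReal.coe_one, Real.norm_of_nonneg (Real.exp_pos x).le]
      exact Real.exp_le_one_iff.mpr hx

theorem Real.abs_exp_sub_exp_le_of_nonpos {a b : ℝ} (ha : a ≤ 0) (hb : b ≤ 0) :
    |Real.exp a - Real.exp b| ≤ |a - b| := by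
  simpa [Real.dist_eq] using Real.lipschitzOnWith_exp_Iic_zero.dist_le_mul a ha b hb

theorem Real.exp_mul_le_max_one_exp {lam s T : ℝ} (hs : s ∈ Icc 0 T) :
    Real.exp (lam * s) ≤ max 1 (Real.exp (lam * T)) := by
  calc Real.exp (lam * s) ≤ Real.exp (max 0 (lam * T)) := by
        refine Real.exp_le_exp.mpr ?_
        rcases le_total 0 lam with hlam | hlam
        · exact le_max_of_le_right (mul_le_mul_of_nonneg_left hs.2 hlam)
        · exact le_max_of_le_left (mul_nonpos_of_nonpos_of_nonneg hlam hs.1)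
    _ = max 1 (Real.exp (lam * T)) := by rw [Real.exp_monotone.map_max, Real.exp_zero]

theorem le_biSup_of_bddAbove_image {α : Type*} {f : α → ℝ} {s : Set α} (hf : BddAbove (f '' s))
    {x : α} (hx : x ∈ s) : f x ≤ ⨆ y ∈ s, f y := by
  obtain ⟨M, hM⟩ := hf
  refine le_ciSup₂ (f := fun y (_ : y ∈ s) => f y) ⟨M, ?_⟩ x hx
  rintro _ ⟨_, ⟨y, rfl⟩, hy, rfl⟩
  exact hM (mem_image_of_mem f hy)

theorem intervalIntegrable_of_measurable_of_abs_le {f : ℝ → ℝ} {a b M : ℝ} (hf : Measurable f)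
    (hM : ∀ x ∈ uIcc a b, |f x| ≤ M) : IntervalIntegrable f volume a b :=
  (Measure.integrableOn_of_bounded (M := M) measure_Icc_lt_top.ne hf.aestronglyMeasurable
    ((ae_restrict_mem measurableSet_Icc).mono hM)).intervalIntegrable

theorem abs_intervalIntegral_le_of_forall_abs_le {f : ℝ → ℝ} {a b C : ℝ} (hab : a ≤ b)
    (h : ∀ x ∈ Icc a b, |f x| ≤ C) : |∫ x in a..b, f x| ≤ C * (b - a) := by
  simpa [abs_of_nonneg (sub_nonneg.mpr hab)] using norm_integral_le_of_norm_le_const (f := f)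
    fun x hx => (Real.norm_eq_abs _).trans_le (h x (Ioc_subset_Icc_self (uIoc_of_le hab ▸ hx)))

theorem abs_mul_sub_mul_le (a₁ a₂ b₁ b₂ : ℝ) :
    |a₁ * b₂ - a₂ * b₁| ≤ |a₁| * |b₂ - b₁| + |b₁| * |a₁ - a₂| := by
  calc |a₁ * b₂ - a₂ * b₁| = |a₁ * (b₂ - b₁) + b₁ * (a₁ - a₂)| := by ring_nf
    _ ≤ |a₁ * (b₂ - b₁)| + |b₁ * (a₁ - a₂)| := abs_add_le _ _
    _ = |a₁| * |b₂ - b₁| + |b₁| * |a₁ - a₂| := by rw [abs_mul, abs_mul]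

/-- The paper's `E_i`, for `ψ = ψ_i`. -/
noncomputable def decayFactor (c : ℝ) (ψ : ℝ → ℝ) (s : ℝ) : ℝ :=
  Real.exp (-c * ∫ ξ in (0 : ℝ)..s, |ψ ξ|)

section decayFactor

variable {c s t S : ℝ} {ψ ψ₁ ψ₂ w : ℝ → ℝ}

theorem decayFactor_exponent_nonpos (hc : 0 ≤ c) (hs : 0 ≤ s) :
    -c * ∫ ξ in (0 : ℝ)..s, |ψ ξ| ≤ 0 :=
  mul_nonpos_of_nonpos_of_nonneg (neg_nonpos.mpr hc)
    (integral_nonneg hs fun _ _ => abs_nonneg _)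

theorem abs_decayFactor_le_one (hc : 0 ≤ c) (hs : 0 ≤ s) : |decayFactor c ψ s| ≤ 1 := by
  rw [decayFactor, Real.abs_exp]
  exact Real.exp_le_one_iff.mpr (decayFactor_exponent_nonpos hc hs)

theorem continuousOn_decayFactor (hψ : IntervalIntegrable (fun ξ => |ψ ξ|) volume 0 t) :
    ContinuousOn (decayFactor c ψ) (uIcc 0 t) :=
  Real.continuous_exp.comp_continuousOn
    (continuousOn_const.mul (continuousOn_primitive_interval' hψ left_mem_uIcc))

theorem abs_decayFactor_sub_le (hc : 0 ≤ c) (hs : 0 ≤ s)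
    (hψ₁ : IntervalIntegrable (fun ξ => |ψ₁ ξ|) volume 0 s)
    (hψ₂ : IntervalIntegrable (fun ξ => |ψ₂ ξ|) volume 0 s)
    (hS : ∀ ξ ∈ Icc 0 s, |ψ₁ ξ - ψ₂ ξ| ≤ S) :
    |decayFactor c ψ₁ s - decayFactor c ψ₂ s| ≤ c * S * s := by
  have hF : |(∫ ξ in (0 : ℝ)..s, |ψ₁ ξ|) - (∫ ξ in (0 : ℝ)..s, |ψ₂ ξ|)| ≤ S * s := by
    rw [← integral_sub hψ₁ hψ₂]
    simpa using abs_intervalIntegral_le_of_forall_abs_le (f := fun ξ => |ψ₁ ξ| - |ψ₂ ξ|) hs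
      fun ξ hξ => (abs_abs_sub_abs_le_abs_sub _ _).trans (hS ξ hξ)
  calc |decayFactor c ψ₁ s - decayFactor c ψ₂ s|
      ≤ |-c * (∫ ξ in (0 : ℝ)..s, |ψ₁ ξ|) - -c * (∫ ξ in (0 : ℝ)..s, |ψ₂ ξ|)| :=
        Real.abs_exp_sub_exp_le_of_nonpos (decayFactor_exponent_nonpos hc hs)
          (decayFactor_exponent_nonpos hc hs)
    _ = c * |(∫ ξ in (0 : ℝ)..s, |ψ₁ ξ|) - (∫ ξ in (0 : ℝ)..s, |ψ₂ ξ|)| := by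
        rw [← mul_sub, abs_mul, abs_neg, abs_of_nonneg hc]
    _ ≤ c * S * s := by rw [mul_assoc]; gcongr

variable {C : ℝ}

theorem abs_integral_mul_decayFactor_le (hc : 0 ≤ c) (ht : 0 ≤ t)
    (hw : ∀ s ∈ Icc 0 t, |w s| ≤ C) :
    |∫ s in (0 : ℝ)..t, w s * decayFactor c ψ s| ≤ C * t := by
  simpa using abs_intervalIntegral_le_of_forall_abs_le ht fun s hs => by
    rw [abs_mul]
    simpa using mul_le_mul (hw s hs) (abs_decayFactor_le_one hc hs.1) (abs_nonneg _)
      ((abs_nonneg _).trans (hw s hs))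

theorem abs_integral_mul_decayFactor_sub_le (hc : 0 ≤ c) (ht : 0 ≤ t)
    (hw : ContinuousOn w (uIcc 0 t)) (hwC : ∀ s ∈ Icc 0 t, |w s| ≤ C)
    (hψ₁ : IntervalIntegrable (fun ξ => |ψ₁ ξ|) volume 0 t)
    (hψ₂ : IntervalIntegrable (fun ξ => |ψ₂ ξ|) volume 0 t)
    (hS : ∀ ξ ∈ Icc 0 t, |ψ₁ ξ - ψ₂ ξ| ≤ S) :
    |(∫ s in (0 : ℝ)..t, w s * decayFactor c ψ₁ s) - ∫ s in (0 : ℝ)..t, w s * decayFactor c ψ₂ s|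
      ≤ C * (c * S * t) * t := by
  have hintegrable (ψ : ℝ → ℝ) (hψ : IntervalIntegrable (fun ξ => |ψ ξ|) volume 0 t) :
      IntervalIntegrable (fun s => w s * decayFactor c ψ s) volume 0 t :=
    (hw.mul (continuousOn_decayFactor hψ)).intervalIntegrable
  rw [← integral_sub (hintegrable ψ₁ hψ₁) (hintegrable ψ₂ hψ₂)]
  simpa using abs_intervalIntegral_le_of_forall_abs_le
      (f := fun s => w s * decayFactor c ψ₁ s - w s * decayFactor c ψ₂ s) ht fun s hs => by
    have hsub : uIcc 0 s ⊆ uIcc 0 t := uIcc_subset_uIcc left_mem_uIcc (uIcc_of_le ht ▸ hs)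
    have hE := abs_decayFactor_sub_le hc hs.1 (hψ₁.mono_set hsub) (hψ₂.mono_set hsub)
      fun ξ hξ => hS ξ ⟨hξ.1, hξ.2.trans hs.2⟩
    have hS0 : 0 ≤ S := (abs_nonneg _).trans (hS s hs)
    rw [← mul_sub, abs_mul]
    refine mul_le_mul (hwC s hs) (hE.trans ?_) (abs_nonneg _) ((abs_nonneg _).trans (hwC s hs))
    gcongr
    exact hs.2

end decayFactor

theorem cross_term_estimate_general
    (T c lam : ℝ) (hc : 0 ≤ c)
    (ψ₁ ψ₂ : ℝ → ℝ) (hmeas₁ : Measurable ψ₁) (hmeas₂ : Measurable ψ₂)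
    (hbdd₁ : ∃ M : ℝ, ∀ t ∈ Icc (0 : ℝ) T, |ψ₁ t| ≤ M)
    (hbdd₂ : ∃ M : ℝ, ∀ t ∈ Icc (0 : ℝ) T, |ψ₂ t| ≤ M) :
    ∀ t ∈ Icc (0 : ℝ) T,
      |Real.exp (-c * ∫ ξ in (0:ℝ)..t, |ψ₁ ξ|) *
          (∫ s in (0:ℝ)..t,
            Real.exp (lam * s) * Real.exp (-c * ∫ ξ in (0:ℝ)..s, |ψ₂ ξ|)) -
        Real.exp (-c * ∫ ξ in (0:ℝ)..t, |ψ₂ ξ|) *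
          (∫ s in (0:ℝ)..t,
            Real.exp (lam * s) * Real.exp (-c * ∫ ξ in (0:ℝ)..s, |ψ₁ ξ|))| ≤
      2 * c * max 1 (Real.exp (lam * T)) * T ^ 2 *
        ⨆ ξ ∈ Icc (0 : ℝ) T, |ψ₁ ξ - ψ₂ ξ| := by
  obtain ⟨M₁, hM₁⟩ := hbdd₁
  obtain ⟨M₂, hM₂⟩ := hbdd₂
  intro t ht
  set S := ⨆ ξ ∈ Icc (0 : ℝ) T, |ψ₁ ξ - ψ₂ ξ|
  set C := max 1 (Real.exp (lam * T))
  have hsub : Icc 0 t ⊆ Icc 0 T := Icc_subset_Icc_right ht.2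
  have hbdd : BddAbove ((fun ξ => |ψ₁ ξ - ψ₂ ξ|) '' Icc 0 T) := ⟨M₁ + M₂, by
    rintro _ ⟨ξ, hξ, rfl⟩; exact (abs_sub _ _).trans (add_le_add (hM₁ ξ hξ) (hM₂ ξ hξ))⟩
  have hS : ∀ ξ ∈ Icc 0 t, |ψ₁ ξ - ψ₂ ξ| ≤ S := fun ξ hξ =>
    le_biSup_of_bddAbove_image hbdd (hsub hξ)
  have hintegrable {ψ : ℝ → ℝ} {M : ℝ} (hψ : Measurable ψ) (hM : ∀ ξ ∈ Icc 0 T, |ψ ξ| ≤ M) :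
      IntervalIntegrable (fun ξ => |ψ ξ|) volume 0 t :=
    intervalIntegrable_of_measurable_of_abs_le hψ.abs fun ξ hξ =>
      (abs_abs _).trans_le (hM ξ (hsub (uIcc_of_le ht.1 ▸ hξ)))
  have hw : ∀ s ∈ Icc 0 t, |Real.exp (lam * s)| ≤ C := fun s hs =>
    (Real.abs_exp _).trans_le (Real.exp_mul_le_max_one_exp (hsub hs))
  have hψ₁ := hintegrable hmeas₁ hM₁
  have hψ₂ := hintegrable hmeas₂ hM₂
  have hE := abs_decayFactor_sub_le hc ht.1 hψ₁ hψ₂ hS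
  have hI₁ := abs_integral_mul_decayFactor_le (ψ := ψ₁) hc ht.1 hw
  have hI := abs_integral_mul_decayFactor_sub_le hc ht.1 (by fun_prop) hw hψ₁ hψ₂ hS
  have hS0 : 0 ≤ S := (abs_nonneg _).trans (hS t (right_mem_Icc.mpr ht.1))
  have hC0 : 0 ≤ C := zero_le_one.trans (le_max_left _ _)
  change |decayFactor c ψ₁ t * (∫ s in (0:ℝ)..t, Real.exp (lam * s) * decayFactor c ψ₂ s) -
    decayFactor c ψ₂ t * ∫ s in (0:ℝ)..t, Real.exp (lam * s) * decayFactor c ψ₁ s| ≤ _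
  rw [abs_sub_comm] at hI
  calc _ ≤ _ := abs_mul_sub_mul_le _ _ _ _
    _ ≤ 1 * (C * (c * S * t) * t) + C * t * (c * S * t) := by
        gcongr
        · exact abs_decayFactor_le_one hc ht.1
        · exact mul_nonneg hC0 ht.1
    _ = 2 * c * C * t ^ 2 * S := by ring
    _ ≤ 2 * c * C * T ^ 2 * S := by gcongr; exacts [ht.1, ht.2]

/-- **Inequality (12) of the paper** (the cross-term estimate). With
`E_i(t) = e^{−c∫₀ᵗ|ψ_i|}` and `I_i(t) = ∫₀ᵗ e^{λs} E_i(s) ds`, one has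
`|E₁(t)I₂(t) − E₂(t)I₁(t)| ≤ 2 c C_λ T² ‖ψ₁ − ψ₂‖_{∞,[0,T]}` where
`C_λ = max{1, e^{λT}}`. -/
theorem cross_term_estimate
    (T c lam : ℝ) (hT : 0 < T) (hc : 0 ≤ c)
    (ψ₁ ψ₂ : ℝ → ℝ) (hmeas₁ : Measurable ψ₁) (hmeas₂ : Measurable ψ₂)
    (hbdd₁ : ∃ M : ℝ, ∀ t ∈ Icc (0 : ℝ) T, |ψ₁ t| ≤ M)
    (hbdd₂ : ∃ M : ℝ, ∀ t ∈ Icc (0 : ℝ) T, |ψ₂ t| ≤ M) :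
    ∀ t ∈ Icc (0 : ℝ) T,
      |Real.exp (-c * ∫ ξ in (0:ℝ)..t, |ψ₁ ξ|) *
          (∫ s in (0:ℝ)..t,
            Real.exp (lam * s) * Real.exp (-c * ∫ ξ in (0:ℝ)..s, |ψ₂ ξ|)) -
        Real.exp (-c * ∫ ξ in (0:ℝ)..t, |ψ₂ ξ|) *
          (∫ s in (0:ℝ)..t,
            Real.exp (lam * s) * Real.exp (-c * ∫ ξ in (0:ℝ)..s, |ψ₁ ξ|))| ≤
      2 * c * max 1 (Real.exp (lam * T)) * T ^ 2 *
        ⨆ ξ ∈ Icc (0 : ℝ) T, |ψ₁ ξ - ψ₂ ξ| :=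
  cross_term_estimate_general T c lam hc ψ₁ ψ₂ hmeas₁ hmeas₂ hbdd₁ hbdd₂
end

section
/- For every M > 0 there exists a constant C₂ ≥ 0, depending only on r_N, μ_N, β₁, α_N, γ_N, C_λ, T, k_A, r_A, α_A, γ_A, a₀, n₀ and M, such that for all bounded measurable ψ₁, ψ₂ : [0,T] → ℝ with sup_{ξ ∈ [0,T]} |ψ₁(ξ)| ≤ M and sup_{ξ ∈ [0,T]} |ψ₂(ξ)| ≤ M, and all t ∈ [0,T], one has |Θ(ψ₁)(t) − Θ(ψ₂)(t)| ≤ C₂ · sup_{ξ ∈ [0,T]} |ψ₁(ξ) − ψ₂(ξ)|. -/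
open MeasureTheory Set intervalIntegral

/-- `exp` is Lipschitz on `(-∞, c]` with constant `exp c`. -/
private lemma exp_lip {x y c : ℝ} (hx : x ≤ c) (hy : y ≤ c) :
    |Real.exp x - Real.exp y| ≤ Real.exp c * |x - y| := by
  wlog h : y ≤ x generalizing x y
  · rw [abs_sub_comm, abs_sub_comm x y]
    exact this hy hx (le_of_not_ge h)
  rw [abs_of_nonneg (sub_nonneg.2 (Real.exp_le_exp.2 h)), abs_of_nonneg (sub_nonneg.2 h)]
  have h3 : (y - x + 1) * Real.exp x ≤ Real.exp y := by
    calc (y - x + 1) * Real.exp x ≤ Real.exp (y - x) * Real.exp x :=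
          mul_le_mul_of_nonneg_right (Real.add_one_le_exp _) (Real.exp_pos x).le
      _ = Real.exp y := by rw [← Real.exp_add]; ring_nf
  have h4 : Real.exp x ≤ Real.exp c := Real.exp_le_exp.2 hx
  nlinarith [Real.exp_pos x, sub_nonneg.2 h]

private lemma II_of_bdd {f : ℝ → ℝ} (hf : Measurable f) {t C : ℝ} (ht : 0 ≤ t)
    (hC : ∀ x ∈ Icc (0:ℝ) t, |f x| ≤ C) : IntervalIntegrable f volume 0 t := by
  rw [intervalIntegrable_iff_integrableOn_Icc_of_le ht]
  refine Measure.integrableOn_of_bounded (M := C) (by simp) hf.aestronglyMeasurable ?_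
  filter_upwards [ae_restrict_mem measurableSet_Icc] with x hx
  simpa using hC x hx

private lemma int_le_of_bdd {f : ℝ → ℝ} {t C : ℝ} (ht : 0 ≤ t)
    (hC : ∀ x ∈ Icc (0:ℝ) t, |f x| ≤ C) :
    |∫ s in (0:ℝ)..t, f s| ≤ C * t := by
  have h := intervalIntegral.norm_integral_le_of_norm_le_const (a := (0:ℝ)) (b := t) (C := C)
    (f := f) (fun x hx => by
      rw [uIoc_of_le ht] at hx
      simpa using hC x (Ioc_subset_Icc_self hx))
  simpa [Real.norm_eq_abs, abs_of_nonneg ht] using h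

private lemma int_diff_le {f g : ℝ → ℝ} {t C : ℝ} (ht : 0 ≤ t)
    (hf : IntervalIntegrable f volume 0 t) (hg : IntervalIntegrable g volume 0 t)
    (hC : ∀ x ∈ Icc (0:ℝ) t, |f x - g x| ≤ C) :
    |(∫ s in (0:ℝ)..t, f s) - ∫ s in (0:ℝ)..t, g s| ≤ C * t := by
  rw [← intervalIntegral.integral_sub hf hg]
  exact int_le_of_bdd ht hC

private lemma div_sub_div_bound {n₁ n₂ d₁ d₂ k Bn δn δd : ℝ}
    (hk : 0 < k) (hd₁ : k ≤ d₁) (hd₂ : k ≤ d₂)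
    (hn₂ : |n₂| ≤ Bn) (hdn : |n₁ - n₂| ≤ δn) (hdd : |d₁ - d₂| ≤ δd) :
    |n₁ / d₁ - n₂ / d₂| ≤ δn / k + Bn * δd / (k * k) := by
  have hp₁ : (0:ℝ) < d₁ := hk.trans_le hd₁
  have hp₂ : (0:ℝ) < d₂ := hk.trans_le hd₂
  have hBn : 0 ≤ Bn := le_trans (abs_nonneg _) hn₂
  have hδd : 0 ≤ δd := le_trans (abs_nonneg _) hdd
  have key : n₁ / d₁ - n₂ / d₂ = (n₁ - n₂) / d₁ + n₂ * (d₂ - d₁) / (d₁ * d₂) := by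
    field_simp
    ring
  rw [key]
  have e1 : |(n₁ - n₂) / d₁| ≤ δn / k := by
    rw [abs_div, abs_of_pos hp₁]
    exact div_le_div₀ (le_trans (abs_nonneg _) hdn) hdn hk hd₁
  have e2 : |n₂ * (d₂ - d₁) / (d₁ * d₂)| ≤ Bn * δd / (k * k) := by
    rw [abs_div, abs_mul, abs_of_pos (mul_pos hp₁ hp₂)]
    refine div_le_div₀ (mul_nonneg hBn hδd) ?_ (mul_pos hk hk) ?_
    · exact mul_le_mul hn₂ (by rwa [abs_sub_comm]) (abs_nonneg _) hBn
    · exact mul_le_mul hd₁ hd₂ hk.le hp₁.le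
  exact (abs_add_le _ _).trans (add_le_add e1 e2)

set_option maxHeartbeats 4000000 in
/-- **Lemma 5(iv) of the paper.** On each ball `‖ψ‖_∞ ≤ M`, `Θ` is Lipschitz in the
sup norm on `[0,T]`, with a constant `C₂` depending only on the data and `M`. -/
theorem Theta_lipschitz
    (T rA kA μA εA αA γA rN μN β₁ αN γN a₀ n₀ : ℝ)
    (hT : 0 < T) (hrA : 0 < rA) (hkA : 0 < kA)
    (hμA : 0 ≤ μA) (hεA : 0 ≤ εA) (hαA : 0 ≤ αA) (hγA : 0 ≤ γA)
    (hrN : 0 ≤ rN) (hμN : 0 ≤ μN) (hβ₁ : 0 ≤ β₁) (hαN : 0 ≤ αN) (hγN : 0 ≤ γN)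
    (ha₀ : 0 ≤ a₀) (hn₀ : 0 ≤ n₀)
    (M : ℝ) (hM : 0 < M) :
    ∃ C₂ : ℝ, 0 ≤ C₂ ∧
      ∀ ψ₁ ψ₂ : ℝ → ℝ, Measurable ψ₁ → Measurable ψ₂ →
        (∀ t ∈ Icc (0 : ℝ) T, |ψ₁ t| ≤ M) → (∀ t ∈ Icc (0 : ℝ) T, |ψ₂ t| ≤ M) →
        ∀ t ∈ Icc (0 : ℝ) T,
          |Theta rN μN β₁ αN γN rA kA αA γA (rA - (μA + εA)) a₀ n₀ ψ₁ t -
            Theta rN μN β₁ αN γN rA kA αA γA (rA - (μA + εA)) a₀ n₀ ψ₂ t| ≤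
          C₂ * ⨆ ξ ∈ Icc (0 : ℝ) T, |ψ₁ ξ - ψ₂ ξ| := by
  set lam := rA - (μA + εA) with hlam
  set Eb := Real.exp (|lam| * T) with hEbdef
  have hEb : (0:ℝ) < Eb := Real.exp_pos _
  set K1 := Eb * (αA * γA) * T with hK1def
  have hK1 : 0 ≤ K1 := mul_nonneg (mul_nonneg hEb.le (mul_nonneg hαA hγA)) hT.le
  set K2 := a₀ * kA * (K1 / kA + Eb * (a₀ * rA * T * K1) / (kA * kA)) with hK2def
  have hK2 : 0 ≤ K2 := by
    refine mul_nonneg (mul_nonneg ha₀ hkA.le) (add_nonneg ?_ ?_)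
    · exact div_nonneg hK1 hkA.le
    · exact div_nonneg (mul_nonneg hEb.le (mul_nonneg (mul_nonneg (mul_nonneg ha₀ hrA.le) hT.le) hK1))
        (mul_nonneg hkA.le hkA.le)
  set B := Real.exp (μN * T + αN * γN * (M * T) + β₁ * (a₀ * Eb * T)) with hBdef
  have hB : (0:ℝ) < B := Real.exp_pos _
  set K3 := B * (αN * γN * T + β₁ * (T * K2)) with hK3def
  have hK3 : 0 ≤ K3 := by
    refine mul_nonneg hB.le (add_nonneg ?_ ?_)
    · exact mul_nonneg (mul_nonneg hαN hγN) hT.le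
    · exact mul_nonneg hβ₁ (mul_nonneg hT.le hK2)
  refine ⟨rN * T * K3 + (n₀ + rN * (T * B)) * K3, ?_, ?_⟩
  · refine add_nonneg (mul_nonneg (mul_nonneg hrN hT.le) hK3) (mul_nonneg ?_ hK3)
    exact add_nonneg hn₀ (mul_nonneg hrN (mul_nonneg hT.le hB.le))
  intro ψ₁ ψ₂ hm₁ hm₂ hb₁ hb₂ t ht
  set δ := ⨆ ξ ∈ Icc (0 : ℝ) T, |ψ₁ ξ - ψ₂ ξ| with hδdef
  have hδ0 : 0 ≤ δ := Real.iSup_nonneg fun ξ => Real.iSup_nonneg fun _ => abs_nonneg _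
  have hδ : ∀ ξ ∈ Icc (0:ℝ) T, |ψ₁ ξ - ψ₂ ξ| ≤ δ := by
    intro ξ hξ
    have hbdd : BddAbove (range fun ξ => ⨆ _ : ξ ∈ Icc (0:ℝ) T, |ψ₁ ξ - ψ₂ ξ|) := by
      refine ⟨2 * M, ?_⟩
      rintro x ⟨ξ', rfl⟩
      refine Real.iSup_le (fun hξ' => ?_) (by linarith)
      calc |ψ₁ ξ' - ψ₂ ξ'| ≤ |ψ₁ ξ'| + |ψ₂ ξ'| := abs_sub _ _
        _ ≤ 2 * M := by linarith [hb₁ ξ' hξ', hb₂ ξ' hξ']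
    have h1 : (⨆ _ : ξ ∈ Icc (0:ℝ) T, |ψ₁ ξ - ψ₂ ξ|) ≤ δ := le_ciSup hbdd ξ
    rwa [ciSup_pos hξ] at h1
  -- per-ψ facts
  have pack : ∀ ψ : ℝ → ℝ, Measurable ψ → (∀ s ∈ Icc (0:ℝ) T, |ψ s| ≤ M) →
      (∀ s ∈ Icc (0:ℝ) T, IntervalIntegrable (fun ξ => |ψ ξ|) volume 0 s) ∧
      (∀ s ∈ Icc (0:ℝ) T, 0 ≤ (∫ ξ in (0:ℝ)..s, |ψ ξ|) ∧ (∫ ξ in (0:ℝ)..s, |ψ ξ|) ≤ M * T) ∧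
      (∀ s ∈ Icc (0:ℝ) T, IntervalIntegrable
        (fun u => Real.exp (lam * u) * Real.exp (-(αA * γA) * ∫ ξ in (0:ℝ)..u, |ψ ξ|))
        volume 0 s) ∧
      (∀ s ∈ Icc (0:ℝ) T, 0 ≤ Lam rA kA αA γA lam a₀ ψ s ∧
        Lam rA kA αA γA lam a₀ ψ s ≤ a₀ * Eb) ∧
      (∀ s ∈ Icc (0:ℝ) T, IntervalIntegrable (Lam rA kA αA γA lam a₀ ψ) volume 0 s) ∧
      (∀ s ∈ Icc (0:ℝ) T, 0 ≤ (∫ ξ in (0:ℝ)..s, Lam rA kA αA γA lam a₀ ψ ξ) ∧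
        (∫ ξ in (0:ℝ)..s, Lam rA kA αA γA lam a₀ ψ ξ) ≤ a₀ * Eb * T) ∧
      (∀ s ∈ Icc (0:ℝ) T, IntervalIntegrable
        (fun u => Real.exp (μN * u) * Real.exp ((αN * γN) * ∫ ξ in (0:ℝ)..u, |ψ ξ|) *
          Real.exp (β₁ * ∫ ξ in (0:ℝ)..u, Lam rA kA αA γA lam a₀ ψ ξ)) volume 0 s) ∧
      (∀ s ∈ Icc (0:ℝ) T,
        1 ≤ Real.exp (μN * s) * Real.exp ((αN * γN) * ∫ ξ in (0:ℝ)..s, |ψ ξ|) *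
          Real.exp (β₁ * ∫ ξ in (0:ℝ)..s, Lam rA kA αA γA lam a₀ ψ ξ) ∧
        Real.exp (μN * s) * Real.exp ((αN * γN) * ∫ ξ in (0:ℝ)..s, |ψ ξ|) *
          Real.exp (β₁ * ∫ ξ in (0:ℝ)..s, Lam rA kA αA γA lam a₀ ψ ξ) ≤ B) := by
    intro ψ hm hb
    have hsub : ∀ s ∈ Icc (0:ℝ) T, Icc (0:ℝ) s ⊆ Icc (0:ℝ) T :=
      fun s hs => Icc_subset_Icc le_rfl hs.2
    have hIint : ∀ s ∈ Icc (0:ℝ) T, IntervalIntegrable (fun ξ => |ψ ξ|) volume 0 s := by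
      intro s hs
      exact II_of_bdd hm.abs hs.1 (fun x hx => by
        rw [abs_abs]; exact hb x (hsub s hs hx))
    have hI0 : ∀ s ∈ Icc (0:ℝ) T, 0 ≤ ∫ ξ in (0:ℝ)..s, |ψ ξ| := fun s hs =>
      intervalIntegral.integral_nonneg hs.1 (fun u _ => abs_nonneg _)
    have hIB : ∀ s ∈ Icc (0:ℝ) T, 0 ≤ (∫ ξ in (0:ℝ)..s, |ψ ξ|) ∧
        (∫ ξ in (0:ℝ)..s, |ψ ξ|) ≤ M * T := by
      intro s hs
      refine ⟨hI0 s hs, ?_⟩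
      have h1 := int_le_of_bdd hs.1 (C := M) (fun x hx => by
        rw [abs_abs]; exact hb x (hsub s hs hx))
      have h2 : M * s ≤ M * T := mul_le_mul_of_nonneg_left hs.2 hM.le
      calc (∫ ξ in (0:ℝ)..s, |ψ ξ|) ≤ |(∫ ξ in (0:ℝ)..s, |ψ ξ|)| := le_abs_self _
        _ ≤ M * s := h1
        _ ≤ M * T := h2
    -- continuity of the primitive of |ψ|
    have hIcc : IntegrableOn (fun ξ => |ψ ξ|) (Icc (0:ℝ) T) volume :=
      (intervalIntegrable_iff_integrableOn_Icc_of_le hT.le).1 (hIint T ⟨hT.le, le_rfl⟩)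
    have hIcont : ContinuousOn (fun s => ∫ ξ in (0:ℝ)..s, |ψ ξ|) (Icc (0:ℝ) T) := by
      have h := intervalIntegral.continuousOn_primitive_interval (a := (0:ℝ)) (b := T)
        (μ := volume) (f := fun ξ => |ψ ξ|) (by rwa [uIcc_of_le hT.le])
      rwa [uIcc_of_le hT.le] at h
    have hNcont : ContinuousOn
        (fun u => Real.exp (lam * u) * Real.exp (-(αA * γA) * ∫ ξ in (0:ℝ)..u, |ψ ξ|))
        (Icc (0:ℝ) T) := by
      exact ((Real.continuous_exp.comp (continuous_const.mul continuous_id)).continuousOn).mul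
        (Real.continuous_exp.comp_continuousOn (continuousOn_const.mul hIcont))
    have hNnn : ∀ u : ℝ, 0 ≤ Real.exp (lam * u) *
        Real.exp (-(αA * γA) * ∫ ξ in (0:ℝ)..u, |ψ ξ|) :=
      fun u => mul_nonneg (Real.exp_pos _).le (Real.exp_pos _).le
    have hNint : ∀ s ∈ Icc (0:ℝ) T, IntervalIntegrable
        (fun u => Real.exp (lam * u) * Real.exp (-(αA * γA) * ∫ ξ in (0:ℝ)..u, |ψ ξ|))
        volume 0 s := by
      intro s hs
      exact (hNcont.mono (by rw [uIcc_of_le hs.1]; exact hsub s hs)).intervalIntegrable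
    have hDge : ∀ s ∈ Icc (0:ℝ) T, kA ≤ kA + a₀ * rA *
        ∫ u in (0:ℝ)..s, Real.exp (lam * u) *
          Real.exp (-(αA * γA) * ∫ ξ in (0:ℝ)..u, |ψ ξ|) := by
      intro s hs
      have h0 : 0 ≤ ∫ u in (0:ℝ)..s, Real.exp (lam * u) *
          Real.exp (-(αA * γA) * ∫ ξ in (0:ℝ)..u, |ψ ξ|) :=
        intervalIntegral.integral_nonneg hs.1 (fun u _ => hNnn u)
      nlinarith [mul_nonneg ha₀ hrA.le]
    have hexpl : ∀ s ∈ Icc (0:ℝ) T, Real.exp (lam * s) ≤ Eb := by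
      intro s hs
      refine Real.exp_le_exp.2 ?_
      calc lam * s ≤ |lam| * s := mul_le_mul_of_nonneg_right (le_abs_self _) hs.1
        _ ≤ |lam| * T := mul_le_mul_of_nonneg_left hs.2 (abs_nonneg _)
    have hexpI : ∀ s ∈ Icc (0:ℝ) T,
        Real.exp (-(αA * γA) * ∫ ξ in (0:ℝ)..s, |ψ ξ|) ≤ 1 := by
      intro s hs
      rw [Real.exp_le_one_iff]
      have := hI0 s hs
      nlinarith [mul_nonneg hαA hγA]
    have hLamB : ∀ s ∈ Icc (0:ℝ) T, 0 ≤ Lam rA kA αA γA lam a₀ ψ s ∧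
        Lam rA kA αA γA lam a₀ ψ s ≤ a₀ * Eb := by
      intro s hs
      have hden := hDge s hs
      have hdenpos : (0:ℝ) < kA + a₀ * rA *
          ∫ u in (0:ℝ)..s, Real.exp (lam * u) *
            Real.exp (-(αA * γA) * ∫ ξ in (0:ℝ)..u, |ψ ξ|) := lt_of_lt_of_le hkA hden
      have hnum0 : 0 ≤ a₀ * kA * Real.exp (lam * s) *
          Real.exp (-(αA * γA) * ∫ ξ in (0:ℝ)..s, |ψ ξ|) := by positivity
      have hnumle : a₀ * kA * Real.exp (lam * s) *
          Real.exp (-(αA * γA) * ∫ ξ in (0:ℝ)..s, |ψ ξ|) ≤ a₀ * kA * Eb := by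
        have h1 := hexpl s hs
        have h2 := hexpI s hs
        have h3 : (0:ℝ) < Real.exp (lam * s) := Real.exp_pos _
        have h4 : (0:ℝ) < Real.exp (-(αA * γA) * ∫ ξ in (0:ℝ)..s, |ψ ξ|) := Real.exp_pos _
        nlinarith [mul_le_mul_of_nonneg_left (mul_le_mul h1 h2 h4.le hEb.le)
          (mul_nonneg ha₀ hkA.le)]
      constructor
      · exact div_nonneg hnum0 hdenpos.le
      · rw [Lam]
        calc (a₀ * kA * Real.exp (lam * s) *
              Real.exp (-(αA * γA) * ∫ ξ in (0:ℝ)..s, |ψ ξ|)) /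
              (kA + a₀ * rA * ∫ u in (0:ℝ)..s, Real.exp (lam * u) *
                Real.exp (-(αA * γA) * ∫ ξ in (0:ℝ)..u, |ψ ξ|))
            ≤ (a₀ * kA * Eb) / kA := by
              exact div_le_div₀ (by positivity) hnumle hkA hden
          _ = a₀ * Eb := by field_simp
    have hLcont : ContinuousOn (Lam rA kA αA γA lam a₀ ψ) (Icc (0:ℝ) T) := by
      have hNprim : ContinuousOn (fun s => ∫ u in (0:ℝ)..s, Real.exp (lam * u) *
          Real.exp (-(αA * γA) * ∫ ξ in (0:ℝ)..u, |ψ ξ|)) (Icc (0:ℝ) T) := by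
        have h := intervalIntegral.continuousOn_primitive_interval (a := (0:ℝ)) (b := T)
          (μ := volume)
          (f := fun u => Real.exp (lam * u) *
            Real.exp (-(αA * γA) * ∫ ξ in (0:ℝ)..u, |ψ ξ|))
          (by rw [uIcc_of_le hT.le]; exact hNcont.integrableOn_Icc)
        rwa [uIcc_of_le hT.le] at h
      refine ContinuousOn.div ?_ (continuousOn_const.add (continuousOn_const.mul hNprim)) ?_
      · exact ((continuousOn_const.mul
          ((Real.continuous_exp.comp (continuous_const.mul continuous_id)).continuousOn)).mul
          (Real.continuous_exp.comp_continuousOn (continuousOn_const.mul hIcont)))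
      · intro s hs
        exact (lt_of_lt_of_le hkA (hDge s hs)).ne'
    have hLint : ∀ s ∈ Icc (0:ℝ) T, IntervalIntegrable (Lam rA kA αA γA lam a₀ ψ)
        volume 0 s := by
      intro s hs
      exact (hLcont.mono (by rw [uIcc_of_le hs.1]; exact hsub s hs)).intervalIntegrable
    have hJB : ∀ s ∈ Icc (0:ℝ) T, 0 ≤ (∫ ξ in (0:ℝ)..s, Lam rA kA αA γA lam a₀ ψ ξ) ∧
        (∫ ξ in (0:ℝ)..s, Lam rA kA αA γA lam a₀ ψ ξ) ≤ a₀ * Eb * T := by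
      intro s hs
      constructor
      · exact intervalIntegral.integral_nonneg hs.1
          (fun u hu => (hLamB u (hsub s hs hu)).1)
      · have h1 := int_le_of_bdd hs.1 (C := a₀ * Eb) (fun x hx => by
          rw [abs_of_nonneg (hLamB x (hsub s hs hx)).1]
          exact (hLamB x (hsub s hs hx)).2)
        have h2 : a₀ * Eb * s ≤ a₀ * Eb * T :=
          mul_le_mul_of_nonneg_left hs.2 (by positivity)
        calc (∫ ξ in (0:ℝ)..s, Lam rA kA αA γA lam a₀ ψ ξ)
            ≤ |∫ ξ in (0:ℝ)..s, Lam rA kA αA γA lam a₀ ψ ξ| := le_abs_self _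
          _ ≤ a₀ * Eb * s := h1
          _ ≤ a₀ * Eb * T := h2
    have hJcont : ContinuousOn (fun s => ∫ ξ in (0:ℝ)..s, Lam rA kA αA γA lam a₀ ψ ξ)
        (Icc (0:ℝ) T) := by
      have h := intervalIntegral.continuousOn_primitive_interval (a := (0:ℝ)) (b := T)
        (μ := volume) (f := Lam rA kA αA γA lam a₀ ψ)
        (by rw [uIcc_of_le hT.le]; exact hLcont.integrableOn_Icc)
      rwa [uIcc_of_le hT.le] at h
    have hFcont : ContinuousOn
        (fun u => Real.exp (μN * u) * Real.exp ((αN * γN) * ∫ ξ in (0:ℝ)..u, |ψ ξ|) *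
          Real.exp (β₁ * ∫ ξ in (0:ℝ)..u, Lam rA kA αA γA lam a₀ ψ ξ)) (Icc (0:ℝ) T) := by
      exact (((Real.continuous_exp.comp (continuous_const.mul continuous_id)).continuousOn).mul
        (Real.continuous_exp.comp_continuousOn (continuousOn_const.mul hIcont))).mul
        (Real.continuous_exp.comp_continuousOn (continuousOn_const.mul hJcont))
    have hFint : ∀ s ∈ Icc (0:ℝ) T, IntervalIntegrable
        (fun u => Real.exp (μN * u) * Real.exp ((αN * γN) * ∫ ξ in (0:ℝ)..u, |ψ ξ|) *
          Real.exp (β₁ * ∫ ξ in (0:ℝ)..u, Lam rA kA αA γA lam a₀ ψ ξ)) volume 0 s := by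
      intro s hs
      exact (hFcont.mono (by rw [uIcc_of_le hs.1]; exact hsub s hs)).intervalIntegrable
    have hFB : ∀ s ∈ Icc (0:ℝ) T,
        1 ≤ Real.exp (μN * s) * Real.exp ((αN * γN) * ∫ ξ in (0:ℝ)..s, |ψ ξ|) *
          Real.exp (β₁ * ∫ ξ in (0:ℝ)..s, Lam rA kA αA γA lam a₀ ψ ξ) ∧
        Real.exp (μN * s) * Real.exp ((αN * γN) * ∫ ξ in (0:ℝ)..s, |ψ ξ|) *
          Real.exp (β₁ * ∫ ξ in (0:ℝ)..s, Lam rA kA αA γA lam a₀ ψ ξ) ≤ B := by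
      intro s hs
      rw [← Real.exp_add, ← Real.exp_add]
      constructor
      · refine Real.one_le_exp ?_
        have := hI0 s hs
        have := (hJB s hs).1
        have : 0 ≤ μN * s := mul_nonneg hμN hs.1
        positivity
      · rw [hBdef]
        refine Real.exp_le_exp.2 ?_
        have h1 : μN * s ≤ μN * T := mul_le_mul_of_nonneg_left hs.2 hμN
        have h2 : (αN * γN) * (∫ ξ in (0:ℝ)..s, |ψ ξ|) ≤ αN * γN * (M * T) :=
          mul_le_mul_of_nonneg_left (hIB s hs).2 (mul_nonneg hαN hγN)
        have h3 : β₁ * (∫ ξ in (0:ℝ)..s, Lam rA kA αA γA lam a₀ ψ ξ) ≤ β₁ * (a₀ * Eb * T) :=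
          mul_le_mul_of_nonneg_left (hJB s hs).2 hβ₁
        linarith
    exact ⟨hIint, hIB, hNint, hLamB, hLint, hJB, hFint, hFB⟩
  obtain ⟨hIint₁, hIB₁, hNint₁, hLamB₁, hLint₁, hJB₁, hFint₁, hFB₁⟩ := pack ψ₁ hm₁ hb₁
  obtain ⟨hIint₂, hIB₂, hNint₂, hLamB₂, hLint₂, hJB₂, hFint₂, hFB₂⟩ := pack ψ₂ hm₂ hb₂
  have hsub : ∀ s ∈ Icc (0:ℝ) T, Icc (0:ℝ) s ⊆ Icc (0:ℝ) T :=
    fun s hs => Icc_subset_Icc le_rfl hs.2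
  -- difference of the primitives of |ψᵢ|
  have dI : ∀ s ∈ Icc (0:ℝ) T,
      |(∫ ξ in (0:ℝ)..s, |ψ₁ ξ|) - (∫ ξ in (0:ℝ)..s, |ψ₂ ξ|)| ≤ T * δ := by
    intro s hs
    have h := int_diff_le hs.1 (hIint₁ s hs) (hIint₂ s hs) (C := δ) (fun x hx =>
      (abs_abs_sub_abs_le_abs_sub _ _).trans (hδ x (hsub s hs hx)))
    calc |(∫ ξ in (0:ℝ)..s, |ψ₁ ξ|) - (∫ ξ in (0:ℝ)..s, |ψ₂ ξ|)| ≤ δ * s := h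
      _ ≤ T * δ := by nlinarith [hs.2, hs.1]
  -- difference of N
  have dN : ∀ s ∈ Icc (0:ℝ) T,
      |Real.exp (lam * s) * Real.exp (-(αA * γA) * ∫ ξ in (0:ℝ)..s, |ψ₁ ξ|) -
        Real.exp (lam * s) * Real.exp (-(αA * γA) * ∫ ξ in (0:ℝ)..s, |ψ₂ ξ|)| ≤ K1 * δ := by
    intro s hs
    have e : Real.exp (lam * s) * Real.exp (-(αA * γA) * ∫ ξ in (0:ℝ)..s, |ψ₁ ξ|) -
        Real.exp (lam * s) * Real.exp (-(αA * γA) * ∫ ξ in (0:ℝ)..s, |ψ₂ ξ|) =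
        Real.exp (lam * s) * (Real.exp (-(αA * γA) * ∫ ξ in (0:ℝ)..s, |ψ₁ ξ|) -
          Real.exp (-(αA * γA) * ∫ ξ in (0:ℝ)..s, |ψ₂ ξ|)) := by ring
    rw [e, abs_mul, abs_of_pos (Real.exp_pos _)]
    have hle : Real.exp (lam * s) ≤ Eb := by
      refine Real.exp_le_exp.2 ?_
      calc lam * s ≤ |lam| * s := mul_le_mul_of_nonneg_right (le_abs_self _) hs.1
        _ ≤ |lam| * T := mul_le_mul_of_nonneg_left hs.2 (abs_nonneg _)
    have hx1 : -(αA * γA) * (∫ ξ in (0:ℝ)..s, |ψ₁ ξ|) ≤ 0 := by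
      have := (hIB₁ s hs).1; nlinarith [mul_nonneg hαA hγA]
    have hx2 : -(αA * γA) * (∫ ξ in (0:ℝ)..s, |ψ₂ ξ|) ≤ 0 := by
      have := (hIB₂ s hs).1; nlinarith [mul_nonneg hαA hγA]
    have hlip := exp_lip hx1 hx2
    rw [Real.exp_zero, one_mul] at hlip
    have hd : |(-(αA * γA) * ∫ ξ in (0:ℝ)..s, |ψ₁ ξ|) -
        (-(αA * γA) * ∫ ξ in (0:ℝ)..s, |ψ₂ ξ|)| ≤ (αA * γA) * (T * δ) := by
      have e2 : (-(αA * γA) * ∫ ξ in (0:ℝ)..s, |ψ₁ ξ|) -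
          (-(αA * γA) * ∫ ξ in (0:ℝ)..s, |ψ₂ ξ|) =
          (αA * γA) * ((∫ ξ in (0:ℝ)..s, |ψ₂ ξ|) - ∫ ξ in (0:ℝ)..s, |ψ₁ ξ|) := by ring
      rw [e2, abs_mul, abs_of_nonneg (mul_nonneg hαA hγA), abs_sub_comm]
      exact mul_le_mul_of_nonneg_left (dI s hs) (mul_nonneg hαA hγA)
    calc Real.exp (lam * s) * |Real.exp (-(αA * γA) * ∫ ξ in (0:ℝ)..s, |ψ₁ ξ|) -
          Real.exp (-(αA * γA) * ∫ ξ in (0:ℝ)..s, |ψ₂ ξ|)|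
        ≤ Eb * ((αA * γA) * (T * δ)) := by
          refine mul_le_mul hle (hlip.trans hd) (abs_nonneg _) hEb.le
      _ = K1 * δ := by rw [hK1def]; ring
  -- difference of Λ
  have dLam : ∀ s ∈ Icc (0:ℝ) T,
      |Lam rA kA αA γA lam a₀ ψ₁ s - Lam rA kA αA γA lam a₀ ψ₂ s| ≤ K2 * δ := by
    intro s hs
    have hD₁ : kA ≤ kA + a₀ * rA * ∫ u in (0:ℝ)..s, Real.exp (lam * u) *
        Real.exp (-(αA * γA) * ∫ ξ in (0:ℝ)..u, |ψ₁ ξ|) := by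
      have h0 : 0 ≤ ∫ u in (0:ℝ)..s, Real.exp (lam * u) *
          Real.exp (-(αA * γA) * ∫ ξ in (0:ℝ)..u, |ψ₁ ξ|) :=
        intervalIntegral.integral_nonneg hs.1
          (fun u _ => mul_nonneg (Real.exp_pos _).le (Real.exp_pos _).le)
      nlinarith [mul_nonneg ha₀ hrA.le]
    have hD₂ : kA ≤ kA + a₀ * rA * ∫ u in (0:ℝ)..s, Real.exp (lam * u) *
        Real.exp (-(αA * γA) * ∫ ξ in (0:ℝ)..u, |ψ₂ ξ|) := by
      have h0 : 0 ≤ ∫ u in (0:ℝ)..s, Real.exp (lam * u) *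
          Real.exp (-(αA * γA) * ∫ ξ in (0:ℝ)..u, |ψ₂ ξ|) :=
        intervalIntegral.integral_nonneg hs.1
          (fun u _ => mul_nonneg (Real.exp_pos _).le (Real.exp_pos _).le)
      nlinarith [mul_nonneg ha₀ hrA.le]
    have hn₂ : |a₀ * kA * Real.exp (lam * s) *
        Real.exp (-(αA * γA) * ∫ ξ in (0:ℝ)..s, |ψ₂ ξ|)| ≤ a₀ * kA * Eb := by
      rw [abs_of_nonneg (by positivity)]
      have hle : Real.exp (lam * s) ≤ Eb := by
        refine Real.exp_le_exp.2 ?_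
        calc lam * s ≤ |lam| * s := mul_le_mul_of_nonneg_right (le_abs_self _) hs.1
          _ ≤ |lam| * T := mul_le_mul_of_nonneg_left hs.2 (abs_nonneg _)
      have h2 : Real.exp (-(αA * γA) * ∫ ξ in (0:ℝ)..s, |ψ₂ ξ|) ≤ 1 := by
        rw [Real.exp_le_one_iff]
        have := (hIB₂ s hs).1
        nlinarith [mul_nonneg hαA hγA]
      have h3 : (0:ℝ) < Real.exp (lam * s) := Real.exp_pos _
      have h4 : (0:ℝ) < Real.exp (-(αA * γA) * ∫ ξ in (0:ℝ)..s, |ψ₂ ξ|) := Real.exp_pos _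
      nlinarith [mul_le_mul_of_nonneg_left (mul_le_mul hle h2 h4.le hEb.le)
        (mul_nonneg ha₀ hkA.le)]
    have hdn : |a₀ * kA * Real.exp (lam * s) *
          Real.exp (-(αA * γA) * ∫ ξ in (0:ℝ)..s, |ψ₁ ξ|) -
        a₀ * kA * Real.exp (lam * s) *
          Real.exp (-(αA * γA) * ∫ ξ in (0:ℝ)..s, |ψ₂ ξ|)| ≤ a₀ * kA * (K1 * δ) := by
      have e : a₀ * kA * Real.exp (lam * s) *
            Real.exp (-(αA * γA) * ∫ ξ in (0:ℝ)..s, |ψ₁ ξ|) -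
          a₀ * kA * Real.exp (lam * s) *
            Real.exp (-(αA * γA) * ∫ ξ in (0:ℝ)..s, |ψ₂ ξ|) =
          (a₀ * kA) * (Real.exp (lam * s) *
            Real.exp (-(αA * γA) * ∫ ξ in (0:ℝ)..s, |ψ₁ ξ|) -
          Real.exp (lam * s) *
            Real.exp (-(αA * γA) * ∫ ξ in (0:ℝ)..s, |ψ₂ ξ|)) := by ring
      rw [e, abs_mul, abs_of_nonneg (mul_nonneg ha₀ hkA.le)]
      exact mul_le_mul_of_nonneg_left (dN s hs) (mul_nonneg ha₀ hkA.le)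
    have hdd : |(kA + a₀ * rA * ∫ u in (0:ℝ)..s, Real.exp (lam * u) *
          Real.exp (-(αA * γA) * ∫ ξ in (0:ℝ)..u, |ψ₁ ξ|)) -
        (kA + a₀ * rA * ∫ u in (0:ℝ)..s, Real.exp (lam * u) *
          Real.exp (-(αA * γA) * ∫ ξ in (0:ℝ)..u, |ψ₂ ξ|))| ≤
        Eb * (a₀ * rA * T * K1) * δ / (a₀ * kA) * 1 ∨ True := Or.inr trivial
    have hdd' : |(kA + a₀ * rA * ∫ u in (0:ℝ)..s, Real.exp (lam * u) *
          Real.exp (-(αA * γA) * ∫ ξ in (0:ℝ)..u, |ψ₁ ξ|)) -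
        (kA + a₀ * rA * ∫ u in (0:ℝ)..s, Real.exp (lam * u) *
          Real.exp (-(αA * γA) * ∫ ξ in (0:ℝ)..u, |ψ₂ ξ|))| ≤
        a₀ * rA * (T * (K1 * δ)) := by
      have e : (kA + a₀ * rA * ∫ u in (0:ℝ)..s, Real.exp (lam * u) *
            Real.exp (-(αA * γA) * ∫ ξ in (0:ℝ)..u, |ψ₁ ξ|)) -
          (kA + a₀ * rA * ∫ u in (0:ℝ)..s, Real.exp (lam * u) *
            Real.exp (-(αA * γA) * ∫ ξ in (0:ℝ)..u, |ψ₂ ξ|)) =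
          (a₀ * rA) * ((∫ u in (0:ℝ)..s, Real.exp (lam * u) *
            Real.exp (-(αA * γA) * ∫ ξ in (0:ℝ)..u, |ψ₁ ξ|)) -
          ∫ u in (0:ℝ)..s, Real.exp (lam * u) *
            Real.exp (-(αA * γA) * ∫ ξ in (0:ℝ)..u, |ψ₂ ξ|)) := by ring
      rw [e, abs_mul, abs_of_nonneg (mul_nonneg ha₀ hrA.le)]
      have h1 := int_diff_le hs.1 (hNint₁ s hs) (hNint₂ s hs) (C := K1 * δ)
        (fun x hx => dN x (hsub s hs hx))
      have h2 : (K1 * δ) * s ≤ T * (K1 * δ) := by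
        nlinarith [mul_nonneg hK1 hδ0, hs.1, hs.2]
      exact mul_le_mul_of_nonneg_left (h1.trans h2) (mul_nonneg ha₀ hrA.le)
    have key := div_sub_div_bound hkA hD₁ hD₂ hn₂ hdn hdd'
    simp only [Lam]
    refine key.trans (le_of_eq ?_)
    rw [hK2def]
    field_simp
  -- difference of J
  have dJ : ∀ s ∈ Icc (0:ℝ) T,
      |(∫ ξ in (0:ℝ)..s, Lam rA kA αA γA lam a₀ ψ₁ ξ) -
        ∫ ξ in (0:ℝ)..s, Lam rA kA αA γA lam a₀ ψ₂ ξ| ≤ T * (K2 * δ) := by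
    intro s hs
    have h1 := int_diff_le hs.1 (hLint₁ s hs) (hLint₂ s hs) (C := K2 * δ)
      (fun x hx => dLam x (hsub s hs hx))
    have h2 : (K2 * δ) * s ≤ T * (K2 * δ) := by
      nlinarith [mul_nonneg hK2 hδ0, hs.1, hs.2]
    exact h1.trans h2
  -- difference of F
  have dF : ∀ s ∈ Icc (0:ℝ) T,
      |Real.exp (μN * s) * Real.exp ((αN * γN) * ∫ ξ in (0:ℝ)..s, |ψ₁ ξ|) *
          Real.exp (β₁ * ∫ ξ in (0:ℝ)..s, Lam rA kA αA γA lam a₀ ψ₁ ξ) -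
        Real.exp (μN * s) * Real.exp ((αN * γN) * ∫ ξ in (0:ℝ)..s, |ψ₂ ξ|) *
          Real.exp (β₁ * ∫ ξ in (0:ℝ)..s, Lam rA kA αA γA lam a₀ ψ₂ ξ)| ≤ K3 * δ := by
    intro s hs
    simp only [← Real.exp_add]
    have hA₁ : μN * s + (αN * γN) * (∫ ξ in (0:ℝ)..s, |ψ₁ ξ|) +
        β₁ * (∫ ξ in (0:ℝ)..s, Lam rA kA αA γA lam a₀ ψ₁ ξ) ≤
        μN * T + αN * γN * (M * T) + β₁ * (a₀ * Eb * T) := by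
      have h1 : μN * s ≤ μN * T := mul_le_mul_of_nonneg_left hs.2 hμN
      have h2 : (αN * γN) * (∫ ξ in (0:ℝ)..s, |ψ₁ ξ|) ≤ αN * γN * (M * T) :=
        mul_le_mul_of_nonneg_left (hIB₁ s hs).2 (mul_nonneg hαN hγN)
      have h3 : β₁ * (∫ ξ in (0:ℝ)..s, Lam rA kA αA γA lam a₀ ψ₁ ξ) ≤
          β₁ * (a₀ * Eb * T) := mul_le_mul_of_nonneg_left (hJB₁ s hs).2 hβ₁
      linarith
    have hA₂ : μN * s + (αN * γN) * (∫ ξ in (0:ℝ)..s, |ψ₂ ξ|) +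
        β₁ * (∫ ξ in (0:ℝ)..s, Lam rA kA αA γA lam a₀ ψ₂ ξ) ≤
        μN * T + αN * γN * (M * T) + β₁ * (a₀ * Eb * T) := by
      have h1 : μN * s ≤ μN * T := mul_le_mul_of_nonneg_left hs.2 hμN
      have h2 : (αN * γN) * (∫ ξ in (0:ℝ)..s, |ψ₂ ξ|) ≤ αN * γN * (M * T) :=
        mul_le_mul_of_nonneg_left (hIB₂ s hs).2 (mul_nonneg hαN hγN)
      have h3 : β₁ * (∫ ξ in (0:ℝ)..s, Lam rA kA αA γA lam a₀ ψ₂ ξ) ≤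
          β₁ * (a₀ * Eb * T) := mul_le_mul_of_nonneg_left (hJB₂ s hs).2 hβ₁
      linarith
    have hlip := exp_lip hA₁ hA₂
    rw [← hBdef] at hlip
    have hdA : |(μN * s + (αN * γN) * (∫ ξ in (0:ℝ)..s, |ψ₁ ξ|) +
        β₁ * (∫ ξ in (0:ℝ)..s, Lam rA kA αA γA lam a₀ ψ₁ ξ)) -
        (μN * s + (αN * γN) * (∫ ξ in (0:ℝ)..s, |ψ₂ ξ|) +
        β₁ * (∫ ξ in (0:ℝ)..s, Lam rA kA αA γA lam a₀ ψ₂ ξ))| ≤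
        (αN * γN) * (T * δ) + β₁ * (T * (K2 * δ)) := by
      have e : (μN * s + (αN * γN) * (∫ ξ in (0:ℝ)..s, |ψ₁ ξ|) +
          β₁ * (∫ ξ in (0:ℝ)..s, Lam rA kA αA γA lam a₀ ψ₁ ξ)) -
          (μN * s + (αN * γN) * (∫ ξ in (0:ℝ)..s, |ψ₂ ξ|) +
          β₁ * (∫ ξ in (0:ℝ)..s, Lam rA kA αA γA lam a₀ ψ₂ ξ)) =
          (αN * γN) * ((∫ ξ in (0:ℝ)..s, |ψ₁ ξ|) - ∫ ξ in (0:ℝ)..s, |ψ₂ ξ|) +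
          β₁ * ((∫ ξ in (0:ℝ)..s, Lam rA kA αA γA lam a₀ ψ₁ ξ) -
            ∫ ξ in (0:ℝ)..s, Lam rA kA αA γA lam a₀ ψ₂ ξ) := by ring
      rw [e]
      refine (abs_add_le _ _).trans (add_le_add ?_ ?_)
      · rw [abs_mul, abs_of_nonneg (mul_nonneg hαN hγN)]
        have h := dI s hs
        have hTδ : |(∫ ξ in (0:ℝ)..s, |ψ₁ ξ|) - (∫ ξ in (0:ℝ)..s, |ψ₂ ξ|)| ≤ T * δ := h
        exact mul_le_mul_of_nonneg_left hTδ (mul_nonneg hαN hγN)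
      · rw [abs_mul, abs_of_nonneg hβ₁]
        exact mul_le_mul_of_nonneg_left (dJ s hs) hβ₁
    calc |Real.exp (μN * s + (αN * γN) * (∫ ξ in (0:ℝ)..s, |ψ₁ ξ|) +
            β₁ * (∫ ξ in (0:ℝ)..s, Lam rA kA αA γA lam a₀ ψ₁ ξ)) -
          Real.exp (μN * s + (αN * γN) * (∫ ξ in (0:ℝ)..s, |ψ₂ ξ|) +
            β₁ * (∫ ξ in (0:ℝ)..s, Lam rA kA αA γA lam a₀ ψ₂ ξ))|
        ≤ B * ((αN * γN) * (T * δ) + β₁ * (T * (K2 * δ))) := by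
          refine hlip.trans ?_
          exact mul_le_mul_of_nonneg_left hdA hB.le
      _ = K3 * δ := by rw [hK3def]; ring
  -- final assembly
  simp only [Theta]
  have hd₁ := (hFB₁ t ht).1
  have hd₂ := (hFB₂ t ht).1
  have hF₂nn : ∀ x ∈ Icc (0:ℝ) t,
      (0:ℝ) ≤ Real.exp (μN * x) * Real.exp ((αN * γN) * ∫ ξ in (0:ℝ)..x, |ψ₂ ξ|) *
        Real.exp (β₁ * ∫ ξ in (0:ℝ)..x, Lam rA kA αA γA lam a₀ ψ₂ ξ) :=
    fun x hx => le_trans zero_le_one (hFB₂ x (hsub t ht hx)).1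
  have hn₂abs : |n₀ + rN * ∫ u in (0:ℝ)..t,
      Real.exp (μN * u) * Real.exp ((αN * γN) * ∫ ξ in (0:ℝ)..u, |ψ₂ ξ|) *
        Real.exp (β₁ * ∫ ξ in (0:ℝ)..u, Lam rA kA αA γA lam a₀ ψ₂ ξ)| ≤
      n₀ + rN * (T * B) := by
    have hInt0 : 0 ≤ ∫ u in (0:ℝ)..t,
        Real.exp (μN * u) * Real.exp ((αN * γN) * ∫ ξ in (0:ℝ)..u, |ψ₂ ξ|) *
          Real.exp (β₁ * ∫ ξ in (0:ℝ)..u, Lam rA kA αA γA lam a₀ ψ₂ ξ) :=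
      intervalIntegral.integral_nonneg ht.1 hF₂nn
    have hIntB : (∫ u in (0:ℝ)..t,
        Real.exp (μN * u) * Real.exp ((αN * γN) * ∫ ξ in (0:ℝ)..u, |ψ₂ ξ|) *
          Real.exp (β₁ * ∫ ξ in (0:ℝ)..u, Lam rA kA αA γA lam a₀ ψ₂ ξ)) ≤ T * B := by
      have h1 := int_le_of_bdd ht.1 (C := B) (fun x hx => by
        rw [abs_of_nonneg (hF₂nn x hx)]
        exact (hFB₂ x (hsub t ht hx)).2)
      have h2 : B * t ≤ T * B := by nlinarith [hB.le, ht.1, ht.2]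
      exact le_trans (le_trans (le_abs_self _) h1) h2
    rw [abs_of_nonneg (by positivity)]
    nlinarith [mul_le_mul_of_nonneg_left hIntB hrN]
  have hdn : |(n₀ + rN * ∫ u in (0:ℝ)..t,
        Real.exp (μN * u) * Real.exp ((αN * γN) * ∫ ξ in (0:ℝ)..u, |ψ₁ ξ|) *
          Real.exp (β₁ * ∫ ξ in (0:ℝ)..u, Lam rA kA αA γA lam a₀ ψ₁ ξ)) -
      (n₀ + rN * ∫ u in (0:ℝ)..t,
        Real.exp (μN * u) * Real.exp ((αN * γN) * ∫ ξ in (0:ℝ)..u, |ψ₂ ξ|) *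
          Real.exp (β₁ * ∫ ξ in (0:ℝ)..u, Lam rA kA αA γA lam a₀ ψ₂ ξ))| ≤
      rN * (T * (K3 * δ)) := by
    have e : (n₀ + rN * ∫ u in (0:ℝ)..t,
        Real.exp (μN * u) * Real.exp ((αN * γN) * ∫ ξ in (0:ℝ)..u, |ψ₁ ξ|) *
          Real.exp (β₁ * ∫ ξ in (0:ℝ)..u, Lam rA kA αA γA lam a₀ ψ₁ ξ)) -
        (n₀ + rN * ∫ u in (0:ℝ)..t,
        Real.exp (μN * u) * Real.exp ((αN * γN) * ∫ ξ in (0:ℝ)..u, |ψ₂ ξ|) *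
          Real.exp (β₁ * ∫ ξ in (0:ℝ)..u, Lam rA kA αA γA lam a₀ ψ₂ ξ)) =
        rN * ((∫ u in (0:ℝ)..t,
        Real.exp (μN * u) * Real.exp ((αN * γN) * ∫ ξ in (0:ℝ)..u, |ψ₁ ξ|) *
          Real.exp (β₁ * ∫ ξ in (0:ℝ)..u, Lam rA kA αA γA lam a₀ ψ₁ ξ)) -
        ∫ u in (0:ℝ)..t,
        Real.exp (μN * u) * Real.exp ((αN * γN) * ∫ ξ in (0:ℝ)..u, |ψ₂ ξ|) *
          Real.exp (β₁ * ∫ ξ in (0:ℝ)..u, Lam rA kA αA γA lam a₀ ψ₂ ξ)) := by ring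
    rw [e, abs_mul, abs_of_nonneg hrN]
    have h1 := int_diff_le ht.1 (hFint₁ t ht) (hFint₂ t ht) (C := K3 * δ)
      (fun x hx => dF x (hsub t ht hx))
    have h2 : (K3 * δ) * t ≤ T * (K3 * δ) := by
      nlinarith [mul_nonneg hK3 hδ0, ht.1, ht.2]
    exact mul_le_mul_of_nonneg_left (h1.trans h2) hrN
  have key := div_sub_div_bound one_pos hd₁ hd₂ hn₂abs hdn (dF t ht)
  refine key.trans (le_of_eq ?_)
  ring
end

section
/- If ψ : [0,T] → ℝ is continuous, then the function A(t) = Λ(ψ)(t) is differentiable on (0,T), satisfies A(0) = a₀, and for every t ∈ (0,T) solves the Bernoulli-type logistic equation A'(t) = r_A A(t)(1 − A(t)/k_A) − (μ_A + ε_A) A(t) − α_A γ_A |ψ(t)| A(t). -/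
/-! With `E(t) = exp(λt − κ∫₀ᵗ|ψ|)` and `κ = α_A γ_A`, `Λ(ψ) = a₀ k_A E / (k_A + a₀ r_A ∫₀ᵗ E)`.
Since `E' = (λ − κ|ψ|) E`, the quotient rule gives `A' = (λ − κ|ψ|) A − (r_A / k_A) A²`, which is the
logistic equation because `λ = r_A − (μ_A + ε_A)`. -/

open MeasureTheory Set intervalIntegral

section Primitive

variable {E : Type*} [NormedAddCommGroup E] [NormedSpace ℝ E]
  {f : ℝ → E} {a b : ℝ}

theorem ContinuousOn.continuousOn_primitive (hf : ContinuousOn f (Icc a b)) :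
    ContinuousOn (fun x => ∫ t in a..x, f t) (Icc a b) :=
  (intervalIntegral.continuousOn_primitive hf.integrableOn_Icc).congr fun _ hx =>
    integral_of_le hx.1

theorem ContinuousOn.hasDerivAt_primitive [CompleteSpace E] (hf : ContinuousOn f (Icc a b))
    {t : ℝ} (ht : t ∈ Ioo a b) : HasDerivAt (fun u => ∫ x in a..u, f x) (f t) t :=
  integral_hasDerivAt_right
    ((hf.mono (Icc_subset_Icc_right ht.2.le)).intervalIntegrable_of_Icc ht.1.le)
    ((hf.mono Ioo_subset_Icc_self).stronglyMeasurableAtFilter isOpen_Ioo t ht)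
    (hf.continuousAt (Icc_mem_nhds ht.1 ht.2))

end Primitive

theorem hasDerivAt_bernoulli_quotient {E I : ℝ → ℝ} {g K k c t : ℝ}
    (hE : HasDerivAt E (g * E t) t) (hI : HasDerivAt I (E t) t) (hden : k + c * I t ≠ 0) :
    HasDerivAt (fun u => K * E u / (k + c * I u))
      (g * (K * E t / (k + c * I t)) - c * E t / (k + c * I t) * (K * E t / (k + c * I t))) t := by
  refine ((hE.const_mul K).div ((hI.const_mul c).const_add k) hden).congr_deriv ?_
  field_simp

section IntegratingFactor

variable (lam κ : ℝ) (ψ : ℝ → ℝ)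

noncomputable def integratingFactor (s : ℝ) : ℝ :=
  Real.exp (lam * s) * Real.exp (-κ * ∫ ξ in (0:ℝ)..s, |ψ ξ|)

theorem integratingFactor_pos (s : ℝ) : 0 < integratingFactor lam κ ψ s := by
  unfold integratingFactor
  positivity

variable {lam κ ψ} {T : ℝ}

theorem continuousOn_integratingFactor (hψ : ContinuousOn ψ (Icc 0 T)) :
    ContinuousOn (integratingFactor lam κ ψ) (Icc 0 T) :=
  (Real.continuous_exp.comp (continuous_const_mul lam)).continuousOn.mul
    (Real.continuous_exp.comp_continuousOn (continuousOn_const.mul hψ.abs.continuousOn_primitive))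

theorem hasDerivAt_integratingFactor (hψ : ContinuousOn ψ (Icc 0 T)) {t : ℝ}
    (ht : t ∈ Ioo 0 T) :
    HasDerivAt (integratingFactor lam κ ψ) ((lam - κ * |ψ t|) * integratingFactor lam κ ψ t) t := by
  have hlin : HasDerivAt (fun s => lam * s) lam t := by
    simpa using (hasDerivAt_id t).const_mul lam
  refine (hlin.exp.mul ((hψ.abs.hasDerivAt_primitive ht).const_mul (-κ)).exp).congr_deriv ?_
  unfold integratingFactor
  ring

end IntegratingFactor

theorem Lam_eq_div_integratingFactor (rA kA αA γA lam a₀ : ℝ) (ψ : ℝ → ℝ) :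
    Lam rA kA αA γA lam a₀ ψ = fun t => a₀ * kA * integratingFactor lam (αA * γA) ψ t /
      (kA + a₀ * rA * ∫ s in (0:ℝ)..t, integratingFactor lam (αA * γA) ψ s) := by
  funext t
  simp only [Lam, integratingFactor, mul_assoc]

theorem Lam_zero {rA kA αA γA lam a₀ : ℝ} {ψ : ℝ → ℝ} (hkA : kA ≠ 0) :
    Lam rA kA αA γA lam a₀ ψ 0 = a₀ := by
  simp [Lam, hkA]

theorem Lam_solves_ode_general
    (T rA kA μA εA αA γA a₀ : ℝ)
    (hrA : 0 < rA) (hkA : 0 < kA)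
    (ha₀ : 0 ≤ a₀)
    (ψ : ℝ → ℝ) (hcont : ContinuousOn ψ (Icc (0 : ℝ) T)) :
    Lam rA kA αA γA (rA - (μA + εA)) a₀ ψ 0 = a₀ ∧
    ∀ t ∈ Ioo (0 : ℝ) T,
      HasDerivAt (Lam rA kA αA γA (rA - (μA + εA)) a₀ ψ)
        (rA * Lam rA kA αA γA (rA - (μA + εA)) a₀ ψ t *
            (1 - Lam rA kA αA γA (rA - (μA + εA)) a₀ ψ t / kA) -
          (μA + εA) * Lam rA kA αA γA (rA - (μA + εA)) a₀ ψ t -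
          αA * γA * |ψ t| * Lam rA kA αA γA (rA - (μA + εA)) a₀ ψ t) t := by
  refine ⟨Lam_zero hkA.ne', fun t ht => ?_⟩
  have hint : 0 ≤ ∫ s in (0:ℝ)..t, integratingFactor (rA - (μA + εA)) (αA * γA) ψ s :=
    integral_nonneg ht.1.le fun s _ => (integratingFactor_pos _ _ _ s).le
  have hden : kA + a₀ * rA * ∫ s in (0:ℝ)..t,
      integratingFactor (rA - (μA + εA)) (αA * γA) ψ s ≠ 0 := by positivity
  rw [Lam_eq_div_integratingFactor]
  convert hasDerivAt_bernoulli_quotient (K := a₀ * kA) (hasDerivAt_integratingFactor hcont ht)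
    ((continuousOn_integratingFactor hcont).hasDerivAt_primitive ht) hden using 1
  field_simp
  ring

/-- For continuous `ψ`, `A = Λ(ψ)` solves the Bernoulli-type logistic tumor-cell ODE
`A' = r_A A (1 − A/k_A) − (μ_A + ε_A) A − α_A γ_A |ψ| A` on `(0,T)` with `A(0) = a₀`. -/
theorem Lam_solves_ode
    (T rA kA μA εA αA γA a₀ : ℝ)
    (hT : 0 < T) (hrA : 0 < rA) (hkA : 0 < kA)
    (hμA : 0 ≤ μA) (hεA : 0 ≤ εA) (hαA : 0 ≤ αA) (hγA : 0 ≤ γA) (ha₀ : 0 ≤ a₀)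
    (ψ : ℝ → ℝ) (hcont : ContinuousOn ψ (Icc (0 : ℝ) T)) :
    Lam rA kA αA γA (rA - (μA + εA)) a₀ ψ 0 = a₀ ∧
    ∀ t ∈ Ioo (0 : ℝ) T,
      HasDerivAt (Lam rA kA αA γA (rA - (μA + εA)) a₀ ψ)
        (rA * Lam rA kA αA γA (rA - (μA + εA)) a₀ ψ t *
            (1 - Lam rA kA αA γA (rA - (μA + εA)) a₀ ψ t / kA) -
          (μA + εA) * Lam rA kA αA γA (rA - (μA + εA)) a₀ ψ t -
          αA * γA * |ψ t| * Lam rA kA αA γA (rA - (μA + εA)) a₀ ψ t) t :=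
  Lam_solves_ode_general T rA kA μA εA αA γA a₀ hrA hkA ha₀ ψ hcont
end
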